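/- Let M₁, …, M_Q ∈ Matrix (Fin n) (Fin n) ℂ, let θ ∈ ℝ^Q define M = Σ_j θ_j M_j, and let M̄ ∈ Matrix (Fin n) (Fin n) ℂ be invertible. Suppose v* is a nonzero vector attaining β = inf_{v≠0} Re(v* M̄* M v)/‖M̄ v‖₂². Then the vector z(v*) with entries z_j(v*) = Re(v*ᵀ̄ M̄* M_j v*)/‖M̄ v*‖₂² satisfies the box constraints −σ_max(M_j)/σ_min(M̄) ≤ z_j(v*) ≤ σ_max(M_j)/σ_min(M̄) for all j, and satisfies Σ_j θ'_j z_j(v*) ≥ inf_{w≠0} Re(w* M̄* (Σ_j θ'_j M_j) w)/‖M̄ w‖₂² for every θ' ∈ ℝ^Q. Consequently, the infimum of Σ_j θ_j z_j over all z ∈ ℝ^Q satisfying these box constraints and finitely many such linear constraints is at most β. -/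

import Mathlib

open Matrix

/-- Euclidean (ℓ²) norm of a complex vector. -/
noncomputable def vecNorm {n : ℕ} (v : Fin n → ℂ) : ℝ :=
  Real.sqrt (∑ i, ‖v i‖ ^ 2)

/-- Largest singular value (spectral norm) of a complex matrix. -/
noncomputable def sigmaMax {m n : ℕ} (M : Matrix (Fin m) (Fin n) ℂ) : ℝ :=
  ⨆ v : {v : Fin n → ℂ // vecNorm v = 1}, vecNorm (M.mulVec v.1)

/-- Smallest singular value of a square complex matrix. -/
noncomputable def sigmaMin {n : ℕ} (M : Matrix (Fin n) (Fin n) ℂ) : ℝ :=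
  ⨅ v : {v : Fin n → ℂ // vecNorm v = 1}, vecNorm (M.mulVec v.1)

/-- The NNSCM component `z_j(v) = Re(v* M̄* N v) / ‖M̄ v‖₂²`. -/
noncomputable def nnZ {n : ℕ} (Mb N : Matrix (Fin n) (Fin n) ℂ) (v : Fin n → ℂ) : ℝ :=
  (star v ⬝ᵥ (Mbᴴ * N).mulVec v).re / ∑ i, ‖Mb.mulVec v i‖ ^ 2

/-- The NNSCM linearized stability factor
`β = inf_{w ≠ 0} Re(w* M̄* M w) / ‖M̄ w‖₂²`. -/
noncomputable def nnBeta {n : ℕ} (Mb M : Matrix (Fin n) (Fin n) ℂ) : ℝ :=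
  ⨅ w : {w : Fin n → ℂ // w ≠ 0}, nnZ Mb M w.1

/-!
Since `nnZ M̄ N v` is real-linear in `N`, `∑ θ'_j z_j(v*)` is the quotient of `∑ θ'_j M_j`
at `v*`, hence at least `β(θ')`, with equality to `β` at `θ` because `v*` attains it. The box
constraint is Cauchy–Schwarz, `|Re⟨M̄ v, N v⟩| ≤ ‖M̄ v‖ ‖N v‖`, combined with
`‖N v‖ ≤ σ_max(N) ‖v‖ ≤ σ_max(N) ‖M̄ v‖ / σ_min(M̄)`. So `z(v*)` is a feasible point of the linear
program whose objective value is `β`.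
-/

section VecNorm

variable {n : ℕ}

theorem vecNorm_eq_norm_toLp (v : Fin n → ℂ) : vecNorm v = ‖WithLp.toLp 2 v‖ := by
  rw [EuclideanSpace.norm_eq]; rfl

theorem sum_norm_sq_eq_vecNorm_sq (v : Fin n → ℂ) : ∑ i, ‖v i‖ ^ 2 = vecNorm v ^ 2 :=
  (Real.sq_sqrt (by positivity)).symm

theorem vecNorm_nonneg (v : Fin n → ℂ) : 0 ≤ vecNorm v := Real.sqrt_nonneg _

theorem vecNorm_pos {v : Fin n → ℂ} (hv : v ≠ 0) : 0 < vecNorm v := by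
  rw [vecNorm_eq_norm_toLp, norm_pos_iff]
  exact fun h => hv (congrArg WithLp.ofLp h)

theorem vecNorm_smul (c : ℂ) (v : Fin n → ℂ) : vecNorm (c • v) = ‖c‖ * vecNorm v := by
  rw [vecNorm_eq_norm_toLp, vecNorm_eq_norm_toLp, WithLp.toLp_smul, norm_smul]

theorem vecNorm_inv_smul_self {v : Fin n → ℂ} (hv : v ≠ 0) :
    vecNorm (((vecNorm v)⁻¹ : ℂ) • v) = 1 := by
  rw [vecNorm_smul, ← Complex.ofReal_inv, Complex.norm_real, Real.norm_eq_abs,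
    abs_of_pos (inv_pos.mpr (vecNorm_pos hv)), inv_mul_cancel₀ (vecNorm_pos hv).ne']

theorem norm_star_dotProduct_le (x y : Fin n → ℂ) :
    ‖star x ⬝ᵥ y‖ ≤ vecNorm x * vecNorm y := by
  rw [vecNorm_eq_norm_toLp, vecNorm_eq_norm_toLp, dotProduct_comm,
    ← EuclideanSpace.inner_toLp_toLp]
  exact norm_inner_le_norm _ _

theorem exists_vecNorm_eq_one (hn : n ≠ 0) : ∃ u : Fin n → ℂ, vecNorm u = 1 :=
  ⟨Pi.single ⟨0, Nat.pos_of_ne_zero hn⟩ 1, by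
    simp [vecNorm, Pi.single_apply, apply_ite]⟩

end VecNorm

section SingularValues

variable {m n : ℕ}

open scoped Matrix.Norms.L2Operator in
theorem le_sigmaMax (A : Matrix (Fin m) (Fin n) ℂ) (v : Fin n → ℂ) :
    vecNorm (A *ᵥ v) ≤ sigmaMax A * vecNorm v := by
  rcases eq_or_ne v 0 with rfl | hv
  · simp [vecNorm]
  have hbdd : BddAbove (Set.range fun u : {u : Fin n → ℂ // vecNorm u = 1} =>
      vecNorm (A *ᵥ u.1)) := by
    refine ⟨‖A‖, ?_⟩
    rintro _ ⟨u, rfl⟩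
    have h := Matrix.l2_opNorm_mulVec A (WithLp.toLp 2 u.1)
    rwa [← vecNorm_eq_norm_toLp, ← vecNorm_eq_norm_toLp, u.2, mul_one] at h
  have h := le_ciSup hbdd ⟨_, vecNorm_inv_smul_self hv⟩
  simp only [Matrix.mulVec_smul, vecNorm_smul, ← Complex.ofReal_inv, Complex.norm_real,
    Real.norm_eq_abs, abs_of_pos (inv_pos.mpr (vecNorm_pos hv))] at h
  rwa [inv_mul_le_iff₀ (vecNorm_pos hv), mul_comm] at h

theorem sigmaMax_nonneg (A : Matrix (Fin m) (Fin n) ℂ) : 0 ≤ sigmaMax A :=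
  Real.iSup_nonneg fun _ => vecNorm_nonneg _

theorem sigmaMin_mul_le (A : Matrix (Fin n) (Fin n) ℂ) (v : Fin n → ℂ) :
    sigmaMin A * vecNorm v ≤ vecNorm (A *ᵥ v) := by
  rcases eq_or_ne v 0 with rfl | hv
  · simp [vecNorm]
  have hbdd : BddBelow (Set.range fun u : {u : Fin n → ℂ // vecNorm u = 1} =>
      vecNorm (A *ᵥ u.1)) :=
    ⟨0, by rintro _ ⟨u, rfl⟩; exact vecNorm_nonneg _⟩
  have h := ciInf_le hbdd ⟨_, vecNorm_inv_smul_self hv⟩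
  simp only [Matrix.mulVec_smul, vecNorm_smul, ← Complex.ofReal_inv, Complex.norm_real,
    Real.norm_eq_abs, abs_of_pos (inv_pos.mpr (vecNorm_pos hv))] at h
  rwa [le_inv_mul_iff₀ (vecNorm_pos hv), mul_comm] at h

-- For `n = 0` the unit sphere is empty and `sigmaMin A = 0`.
theorem sigmaMin_pos {A : Matrix (Fin n) (Fin n) ℂ} (hA : IsUnit A) (hn : n ≠ 0) :
    0 < sigmaMin A := by
  have hinv : ∀ v, vecNorm v ≤ sigmaMax A⁻¹ * vecNorm (A *ᵥ v) := fun v => by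
    simpa [Matrix.mulVec_mulVec, Matrix.nonsing_inv_mul A ((A.isUnit_iff_isUnit_det).mp hA)]
      using le_sigmaMax A⁻¹ (A *ᵥ v)
  obtain ⟨u₀, hu₀⟩ := exists_vecNorm_eq_one hn
  have : Nonempty {u : Fin n → ℂ // vecNorm u = 1} := ⟨⟨u₀, hu₀⟩⟩
  have hc : 0 < sigmaMax A⁻¹ := by
    refine (sigmaMax_nonneg _).lt_of_ne fun h => ?_
    exact absurd (hinv u₀) (by simp [hu₀, ← h])
  calc 0 < (sigmaMax A⁻¹)⁻¹ := inv_pos.mpr hc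
    _ ≤ sigmaMin A := le_ciInf fun u => by
      rw [inv_le_iff_one_le_mul₀' hc]
      simpa [u.2] using hinv u

end SingularValues

section StabilityFactor

variable {n : ℕ}

theorem nnZ_eq (Mb N : Matrix (Fin n) (Fin n) ℂ) (v : Fin n → ℂ) :
    nnZ Mb N v = (star (Mb *ᵥ v) ⬝ᵥ N *ᵥ v).re / vecNorm (Mb *ᵥ v) ^ 2 := by
  rw [nnZ, sum_norm_sq_eq_vecNorm_sq, ← Matrix.mulVec_mulVec, Matrix.dotProduct_mulVec,
    Matrix.star_mulVec]

theorem abs_nnZ_le {Mb : Matrix (Fin n) (Fin n) ℂ} (hMb : IsUnit Mb)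
    (N : Matrix (Fin n) (Fin n) ℂ) {v : Fin n → ℂ} (hv : v ≠ 0) :
    |nnZ Mb N v| ≤ sigmaMax N / sigmaMin Mb := by
  have hn : n ≠ 0 := by
    rintro rfl
    exact hv (Subsingleton.elim _ _)
  have hσ : 0 < sigmaMin Mb := sigmaMin_pos hMb hn
  have hlow : sigmaMin Mb * vecNorm v ≤ vecNorm (Mb *ᵥ v) := sigmaMin_mul_le Mb v
  set a := vecNorm (Mb *ᵥ v)
  have ha : 0 < a := (mul_pos hσ (vecNorm_pos hv)).trans_le hlow
  rw [nnZ_eq, abs_div, abs_of_pos (pow_pos ha 2), div_le_div_iff₀ (pow_pos ha 2) hσ]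
  calc |(star (Mb *ᵥ v) ⬝ᵥ N *ᵥ v).re| * sigmaMin Mb
      ≤ a * vecNorm (N *ᵥ v) * sigmaMin Mb := by
        gcongr
        exact (Complex.abs_re_le_norm _).trans (norm_star_dotProduct_le _ _)
    _ ≤ a * (sigmaMax N * vecNorm v) * sigmaMin Mb := by
        gcongr
        exact le_sigmaMax N v
    _ = a * sigmaMax N * (sigmaMin Mb * vecNorm v) := by ring
    _ ≤ a * sigmaMax N * a := by
        have := sigmaMax_nonneg N
        gcongr
    _ = sigmaMax N * a ^ 2 := by ring

theorem nnZ_sum_smul {Q : ℕ} (Mb : Matrix (Fin n) (Fin n) ℂ)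
    (M : Fin Q → Matrix (Fin n) (Fin n) ℂ) (c : Fin Q → ℝ) (v : Fin n → ℂ) :
    nnZ Mb (∑ j, (c j : ℂ) • M j) v = ∑ j, c j * nnZ Mb (M j) v := by
  simp only [nnZ, Matrix.mul_sum, Matrix.mul_smul, Matrix.sum_mulVec, Matrix.smul_mulVec,
    dotProduct_sum, dotProduct_smul, smul_eq_mul, Complex.re_sum, Complex.re_ofReal_mul,
    Finset.sum_div, mul_div_assoc]

theorem nnBeta_le_nnZ {Mb : Matrix (Fin n) (Fin n) ℂ} (hMb : IsUnit Mb)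
    (N : Matrix (Fin n) (Fin n) ℂ) {v : Fin n → ℂ} (hv : v ≠ 0) :
    nnBeta Mb N ≤ nnZ Mb N v := by
  refine ciInf_le ⟨-(sigmaMax N / sigmaMin Mb), ?_⟩ (⟨v, hv⟩ : {w : Fin n → ℂ // w ≠ 0})
  rintro _ ⟨w, rfl⟩
  exact neg_le_of_abs_le (abs_nnZ_le hMb N w.2)

end StabilityFactor

theorem neg_sum_abs_mul_le_sum_mul {ι : Type*} [Fintype ι] {θ z b : ι → ℝ}
    (hz : ∀ j, |z j| ≤ b j) : -∑ j, |θ j| * b j ≤ ∑ j, θ j * z j := by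
  rw [← Finset.sum_neg_distrib]
  gcongr with j
  refine neg_le_of_abs_le ?_
  rw [abs_mul]
  exact mul_le_mul_of_nonneg_left (hz j) (abs_nonneg _)

/-- Feasibility of the exact NNSCM vector `z(v*)` for the NNSCM linear program when
`v*` attains `β`: it satisfies the box constraints `|z_j| ≤ σ_max(M_j)/σ_min(M̄)`, the
linear constraints `Σ_j θ'_j z_j ≥ β(θ')` for every `θ'`, and consequently the NNSCM
linear-program value is at most `β`. -/
theorem stmt11 {n Q : ℕ} (M : Fin Q → Matrix (Fin n) (Fin n) ℂ) (θ : Fin Q → ℝ)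
    (Mb : Matrix (Fin n) (Fin n) ℂ) (hMb : IsUnit Mb)
    (vstar : Fin n → ℂ) (hvstar : vstar ≠ 0)
    (hattain : nnZ Mb (∑ j, (θ j : ℂ) • M j) vstar = nnBeta Mb (∑ j, (θ j : ℂ) • M j)) :
    (∀ j : Fin Q,
        -(sigmaMax (M j) / sigmaMin Mb) ≤ nnZ Mb (M j) vstar ∧
          nnZ Mb (M j) vstar ≤ sigmaMax (M j) / sigmaMin Mb) ∧
      (∀ θ' : Fin Q → ℝ,
        nnBeta Mb (∑ j, (θ' j : ℂ) • M j) ≤ ∑ j, θ' j * nnZ Mb (M j) vstar) ∧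
      ∀ (k : ℕ) (θs : Fin k → Fin Q → ℝ),
        sInf {t : ℝ | ∃ z : Fin Q → ℝ,
            (∀ j : Fin Q,
              -(sigmaMax (M j) / sigmaMin Mb) ≤ z j ∧ z j ≤ sigmaMax (M j) / sigmaMin Mb) ∧
            (∀ ℓ : Fin k, nnBeta Mb (∑ j, (θs ℓ j : ℂ) • M j) ≤ ∑ j, θs ℓ j * z j) ∧
            t = ∑ j, θ j * z j}
          ≤ nnBeta Mb (∑ j, (θ j : ℂ) • M j) := by
  have hbox : ∀ j : Fin Q,
      -(sigmaMax (M j) / sigmaMin Mb) ≤ nnZ Mb (M j) vstar ∧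
        nnZ Mb (M j) vstar ≤ sigmaMax (M j) / sigmaMin Mb :=
    fun j => abs_le.mp (abs_nnZ_le hMb (M j) hvstar)
  have hlin : ∀ θ' : Fin Q → ℝ,
      nnBeta Mb (∑ j, (θ' j : ℂ) • M j) ≤ ∑ j, θ' j * nnZ Mb (M j) vstar :=
    fun θ' => nnZ_sum_smul Mb M θ' vstar ▸ nnBeta_le_nnZ hMb _ hvstar
  refine ⟨hbox, hlin, fun k θs => ?_⟩
  rw [← hattain, nnZ_sum_smul]
  refine csInf_le ⟨-∑ j, |θ j| * (sigmaMax (M j) / sigmaMin Mb), ?_⟩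
    ⟨_, hbox, fun ℓ => hlin (θs ℓ), rfl⟩
  rintro _ ⟨z, hz, -, rfl⟩
  exact neg_sum_abs_mul_le_sum_mul fun j => abs_le.mpr (hz j)
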